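/- arXiv:1903.07172 — 8 statements merged into one kernel-verified Lean document; each statement's English description precedes it below -/
import Mathlib

section
/- Let the unit ball B of a norm ‖·‖ on ℝ² be a polygon with vertices p₁,…,p₂ₙ (in order, with pₙ₊ᵢ = −pᵢ). Then for any two points v, w ∈ ℝ², there exists a point c such that v − c is a nonnegative multiple of some vertex pᵢ, c − w is a nonnegative multiple of the adjacent vertex pᵢ₊₁, and ‖v − w‖ = ‖v − c‖ + ‖c − w‖. -/
open Real

private lemma cross_dep (y u : ℝ × ℝ) (hy : y ≠ 0)
    (h : y.1 * u.2 - y.2 * u.1 = 0) : ∃ l : ℝ, u = l • y := by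
  rcases eq_or_ne y.1 0 with h1 | h1
  · have h2 : y.2 ≠ 0 := fun h2 => hy (Prod.ext h1 h2)
    refine ⟨u.2 / y.2, ?_⟩
    have hz : y.2 * u.1 = 0 := by rw [h1] at h; linarith
    have hu1 : u.1 = 0 := by
      rcases mul_eq_zero.mp hz with h' | h'
      · exact absurd h' h2
      · exact h'
    have hrw : (u.2 / y.2) • y = (u.2 / y.2 * y.1, u.2 / y.2 * y.2) := rfl
    rw [hrw, h1]
    refine Prod.ext ?_ ?_ <;> simp [hu1]
    field_simp
  · refine ⟨u.1 / y.1, ?_⟩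
    have hrw : (u.1 / y.1) • y = (u.1 / y.1 * y.1, u.1 / y.1 * y.2) := rfl
    rw [hrw]
    refine Prod.ext ?_ ?_ <;> simp
    · field_simp
    · field_simp; linarith

private lemma exists_root (a b : ℝ) (h : a * b ≤ 0) :
    ∃ s : ℝ, 0 ≤ s ∧ s ≤ 1 ∧ s * a + (1 - s) * b = 0 := by
  rcases eq_or_ne a b with hab | hab
  · have ha : a = 0 := by nlinarith
    exact ⟨1, zero_le_one, le_rfl, by simp [ha]⟩
  · have hd0 : b - a ≠ 0 := sub_ne_zero.mpr (Ne.symm hab)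
    refine ⟨b / (b - a), ?_, ?_, by field_simp; ring⟩
    · rcases mul_nonpos_iff.mp h with ⟨ha, hb⟩ | ⟨ha, hb⟩
      · have hd : b - a < 0 := by
          rcases lt_or_eq_of_le (by linarith : b - a ≤ 0) with h' | h'
          · exact h'
          · exact absurd (by linarith) hab
        exact div_nonneg_iff.mpr (Or.inr ⟨hb, le_of_lt hd⟩)
      · have hd : 0 < b - a := by
          rcases lt_or_eq_of_le (by linarith : 0 ≤ b - a) with h' | h'
          · exact h'
          · exact absurd (by linarith) hab
        exact div_nonneg (by linarith) (le_of_lt hd)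
    · rcases mul_nonpos_iff.mp h with ⟨ha, hb⟩ | ⟨ha, hb⟩
      · have hd : b - a < 0 := by
          rcases lt_or_eq_of_le (by linarith : b - a ≤ 0) with h' | h'
          · exact h'
          · exact absurd (by linarith) hab
        rw [div_le_one_iff]
        right; right
        exact ⟨hd, by linarith⟩
      · have hd : 0 < b - a := by
          rcases lt_or_eq_of_le (by linarith : 0 ≤ b - a) with h' | h'
          · exact h'
          · exact absurd (by linarith) hab
        rw [div_le_one hd]; linarith

private lemma sign_change (g : ℕ → ℝ) (n : ℕ) (hn : 0 < n) (h : g n = -g 0) :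
    ∃ k < n, g k * g (k + 1) ≤ 0 := by
  by_contra hc
  push_neg at hc
  have hpos : ∀ k ≤ n, 0 < g 0 * g k := by
    intro k hk
    induction k with
    | zero => have h0 := hc 0 hn; nlinarith [sq_nonneg (g 1), sq_nonneg (g 0)]
    | succ k ih =>
      have h1 := ih (Nat.le_of_succ_le hk)
      have h2 := hc k (Nat.lt_of_succ_le hk)
      nlinarith [mul_pos h1 h2, sq_nonneg (g k)]
  have hfin := hpos n le_rfl
  rw [h] at hfin
  nlinarith [mul_self_nonneg (g 0)]

/-- Lemma on broken segments for a polygonal norm: if the unit ball of a norm `N`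
on `ℝ²` is a centrally symmetric polygon with vertices `p i` in cyclic order
(`p (i + n) = -p i`, and each segment `[p i, p (i+1)]` lies on the unit sphere),
then any segment `vw` can be broken at a point `c` into two segments parallel to
two consecutive vertices, of the same total length. -/
theorem broken_segment (n : ℕ) (hn : 0 < n) (N : ℝ × ℝ → ℝ)
    (hnonneg : ∀ x, 0 ≤ N x)
    (hhomog : ∀ (c : ℝ) (x), N (c • x) = |c| * N x)
    (htri : ∀ x y, N (x + y) ≤ N x + N y)
    (hdef : ∀ x, N x = 0 → x = 0)
    (p : ZMod (2 * n) → ℝ × ℝ)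
    (hsym : ∀ i, p (i + (n : ZMod (2 * n))) = -p i)
    (hball : {x : ℝ × ℝ | N x ≤ 1} = convexHull ℝ (Set.range p))
    (hedge : ∀ i, ∀ x ∈ segment ℝ (p i) (p (i + 1)), N x = 1)
    (v w : ℝ × ℝ) :
    ∃ (c : ℝ × ℝ) (i : ZMod (2 * n)) (α β : ℝ), 0 ≤ α ∧ 0 ≤ β ∧
      v - c = α • p i ∧ c - w = β • p (i + 1) ∧
      N (v - w) = N (v - c) + N (c - w) := by
  -- main construction lemma
  have key : ∀ (i : ZMod (2 * n)) (s μ : ℝ), 0 ≤ s → s ≤ 1 → 0 ≤ μ →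
      v - w = μ • (s • p i + (1 - s) • p (i + 1)) →
      ∃ (c : ℝ × ℝ) (α β : ℝ), 0 ≤ α ∧ 0 ≤ β ∧
        v - c = α • p i ∧ c - w = β • p (i + 1) ∧
        N (v - w) = N (v - c) + N (c - w) := by
    intro i s μ hs0 hs1 hμ hu
    have hmem : s • p i + (1 - s) • p (i + 1) ∈ segment ℝ (p i) (p (i + 1)) :=
      ⟨s, 1 - s, hs0, by linarith, by ring, rfl⟩
    have hy1 : N (s • p i + (1 - s) • p (i + 1)) = 1 := hedge i _ hmem
    have hna : N (p i) = 1 := hedge i _ (left_mem_segment ℝ _ _)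
    have hnb : N (p (i + 1)) = 1 := hedge i _ (right_mem_segment ℝ _ _)
    refine ⟨v - (μ * s) • p i, μ * s, μ * (1 - s), mul_nonneg hμ hs0,
      mul_nonneg hμ (by linarith), by abel, ?_, ?_⟩
    · have hcw : v - (μ * s) • p i - w
          = μ • (s • p i + (1 - s) • p (i + 1)) - (μ * s) • p i := by
        rw [← hu]; abel
      rw [hcw]
      module
    · have hcw : v - (μ * s) • p i - w
          = μ • (s • p i + (1 - s) • p (i + 1)) - (μ * s) • p i := by
        rw [← hu]; abel
      have hcw2 : v - (μ * s) • p i - w = (μ * (1 - s)) • p (i + 1) := by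
        rw [hcw]; module
      have e1 : N (v - w) = μ := by
        rw [hu, hhomog, hy1, abs_of_nonneg hμ, mul_one]
      have e2 : N (v - (v - (μ * s) • p i)) = μ * s := by
        have : v - (v - (μ * s) • p i) = (μ * s) • p i := by abel
        rw [this, hhomog, hna, abs_of_nonneg (mul_nonneg hμ hs0), mul_one]
      have e3 : N (v - (μ * s) • p i - w) = μ * (1 - s) := by
        rw [hcw2, hhomog, hnb, abs_of_nonneg (mul_nonneg hμ (by linarith)), mul_one]
      rw [e1, e2, e3]; ring
  rcases eq_or_ne (v - w) 0 with hvw | hvw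
  · obtain ⟨c, α, β, h1, h2, h3, h4, h5⟩ :=
      key 0 0 0 le_rfl zero_le_one le_rfl (by simp [hvw])
    exact ⟨c, 0, α, β, h1, h2, h3, h4, h5⟩
  · set u := v - w with hu_def
    set g : ℕ → ℝ := fun k => (p k).1 * u.2 - (p k).2 * u.1 with hg
    have hpn : p ((n : ℕ) : ZMod (2 * n)) = -p 0 := by
      have := hsym 0
      rwa [zero_add] at this
    have hgn : g n = -g 0 := by
      simp only [hg, hpn, Prod.fst_neg, Prod.snd_neg]
      ring
    obtain ⟨k, hk, hks⟩ := sign_change g n hn hgn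
    obtain ⟨s, hs0, hs1, hsv⟩ := exists_root (g k) (g (k + 1)) hks
    set i₀ : ZMod (2 * n) := (k : ZMod (2 * n)) with hi₀
    have hcast : ((k + 1 : ℕ) : ZMod (2 * n)) = i₀ + 1 := by push_cast; rfl
    set y : ℝ × ℝ := s • p i₀ + (1 - s) • p (i₀ + 1) with hy_def
    have hy1 : N y = 1 := hedge i₀ _ ⟨s, 1 - s, hs0, by linarith, by ring, rfl⟩
    have hN0 : N 0 = 0 := by
      have := hhomog 0 (0 : ℝ × ℝ)
      simpa using this
    have hy0 : y ≠ 0 := by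
      intro h
      rw [h, hN0] at hy1
      norm_num at hy1
    have hfy : y.1 * u.2 - y.2 * u.1 = 0 := by
      have h1 : y.1 = s * (p i₀).1 + (1 - s) * (p (i₀ + 1)).1 := by
        simp [hy_def]
      have h2 : y.2 = s * (p i₀).2 + (1 - s) * (p (i₀ + 1)).2 := by
        simp [hy_def]
      rw [h1, h2]
      have hg1 : g k = (p i₀).1 * u.2 - (p i₀).2 * u.1 := rfl
      have hg2 : g (k + 1) = (p (i₀ + 1)).1 * u.2 - (p (i₀ + 1)).2 * u.1 := by
        rw [hg]
        simp only [hcast]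
      rw [hg1, hg2] at hsv
      linarith [hsv]
    obtain ⟨l, hl⟩ := cross_dep y u hy0 hfy
    have hl0 : l ≠ 0 := by
      intro h
      rw [h, zero_smul] at hl
      exact hvw hl
    rcases lt_or_gt_of_ne hl0 with hlneg | hlpos
    · -- l < 0 : use antipodal edge
      set i₁ : ZMod (2 * n) := i₀ + (n : ZMod (2 * n)) with hi₁
      have hp1 : p i₁ = -p i₀ := hsym i₀
      have hp2 : p (i₁ + 1) = -p (i₀ + 1) := by
        have : i₁ + 1 = (i₀ + 1) + (n : ZMod (2 * n)) := by rw [hi₁]; ring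
        rw [this, hsym]
      have hu' : v - w = (-l) • (s • p i₁ + (1 - s) • p (i₁ + 1)) := by
        rw [hp1, hp2]
        have : s • -p i₀ + (1 - s) • -p (i₀ + 1) = -y := by
          rw [hy_def]; module
        rw [this, smul_neg, neg_smul, neg_neg, ← hl]
      obtain ⟨c, α, β, h1, h2, h3, h4, h5⟩ :=
        key i₁ s (-l) hs0 hs1 (by linarith) hu'
      exact ⟨c, i₁, α, β, h1, h2, h3, h4, h5⟩
    · obtain ⟨c, α, β, h1, h2, h3, h4, h5⟩ :=
        key i₀ s l hs0 hs1 (le_of_lt hlpos) (by rw [← hy_def, ← hl])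
      exact ⟨c, i₀, α, β, h1, h2, h3, h4, h5⟩
end

section
/- Let a, b, c be three points in Euclidean space ℝ^d, each distinct from the origin o, such that all three angles ∠aob, ∠boc, ∠coa are at least 120°. Then ∠aob = ∠boc = ∠coa = 120°, and the points a, b, c, o all lie in a common 2-dimensional affine plane. -/
/-!
Normalize to unit vectors `u, v, w`. Then
`0 ≤ ‖u + v + w‖ ^ 2 = 3 + 2 (cos ∠aob + cos ∠boc + cos ∠coa)`, while each cosine is at most
`cos 120° = -1/2`. Hence every cosine equals `-1/2` and `u + v + w = 0`, which puts `c` in the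
span of `a` and `b`.
-/

open Real InnerProductGeometry

theorem Real.cos_two_pi_div_three : cos (2 * π / 3) = -(1 / 2) := by
  rw [show 2 * π / 3 = π - π / 3 by ring, cos_pi_sub, cos_pi_div_three]

namespace InnerProductGeometry

variable {V : Type*} [NormedAddCommGroup V] [InnerProductSpace ℝ V]

theorem cos_angle_le_neg_half_of_le_angle {x y : V} (h : 2 * π / 3 ≤ angle x y) :
    cos (angle x y) ≤ -(1 / 2) :=
  cos_two_pi_div_three ▸
    cos_le_cos_of_nonneg_of_le_pi (by positivity) (angle_le_pi x y) h

theorem angle_eq_two_pi_div_three_of_cos_angle {x y : V} (h : cos (angle x y) = -(1 / 2)) :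
    angle x y = 2 * π / 3 :=
  injOn_cos ⟨angle_nonneg x y, angle_le_pi x y⟩
    ⟨by positivity, by linarith [pi_pos]⟩ (h.trans cos_two_pi_div_three.symm)

theorem inner_inv_norm_smul_eq_cos_angle (x y : V) :
    inner ℝ (‖x‖⁻¹ • x) (‖y‖⁻¹ • y) = cos (angle x y) := by
  rw [cos_angle, real_inner_smul_left, real_inner_smul_right, div_eq_inv_mul, mul_inv]
  ring

theorem norm_inv_norm_smul_add_sq {a b c : V} (ha : a ≠ 0) (hb : b ≠ 0) (hc : c ≠ 0) :
    ‖‖a‖⁻¹ • a + ‖b‖⁻¹ • b + ‖c‖⁻¹ • c‖ ^ 2 =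
      3 + 2 * (cos (angle a b) + cos (angle b c) + cos (angle c a)) := by
  simp only [← real_inner_self_eq_norm_sq, inner_add_left, inner_add_right,
    inner_inv_norm_smul_eq_cos_angle]
  rw [angle_self ha, angle_self hb, angle_self hc, angle_comm b a, angle_comm c b,
    angle_comm a c, cos_zero]
  ring

theorem neg_three_halves_le_cos_angle_add {a b c : V} (ha : a ≠ 0) (hb : b ≠ 0) (hc : c ≠ 0) :
    -(3 / 2) ≤ cos (angle a b) + cos (angle b c) + cos (angle c a) := by
  nlinarith [norm_inv_norm_smul_add_sq ha hb hc, sq_nonneg ‖‖a‖⁻¹ • a + ‖b‖⁻¹ • b + ‖c‖⁻¹ • c‖]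

theorem inv_norm_smul_add_eq_zero_of_cos_angle_add {a b c : V} (ha : a ≠ 0) (hb : b ≠ 0)
    (hc : c ≠ 0) (h : cos (angle a b) + cos (angle b c) + cos (angle c a) = -(3 / 2)) :
    ‖a‖⁻¹ • a + ‖b‖⁻¹ • b + ‖c‖⁻¹ • c = 0 := by
  have hnorm := norm_inv_norm_smul_add_sq ha hb hc
  rw [h] at hnorm
  exact norm_eq_zero.1 (pow_eq_zero_iff two_ne_zero |>.1 (by linarith))

theorem mem_span_pair_of_inv_norm_smul_add_eq_zero {a b c : V} (hc : c ≠ 0)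
    (h : ‖a‖⁻¹ • a + ‖b‖⁻¹ • b + ‖c‖⁻¹ • c = 0) : c ∈ Submodule.span ℝ {a, b} := by
  refine Submodule.mem_span_pair.2 ⟨-(‖c‖ * ‖a‖⁻¹), -(‖c‖ * ‖b‖⁻¹), ?_⟩
  have hc' : ‖c‖ ≠ 0 := norm_ne_zero_iff.2 hc
  calc (-(‖c‖ * ‖a‖⁻¹)) • a + (-(‖c‖ * ‖b‖⁻¹)) • b
      = ‖c‖ • (‖c‖⁻¹ • c - (‖a‖⁻¹ • a + ‖b‖⁻¹ • b + ‖c‖⁻¹ • c)) := by module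
    _ = c := by rw [h, sub_zero, smul_inv_smul₀ hc']

end InnerProductGeometry

theorem Submodule.finrank_span_pair_le {R M : Type*} [Ring R] [StrongRankCondition R]
    [AddCommGroup M] [Module R M] (x y : M) : Module.finrank R (span R {x, y}) ≤ 2 := by
  classical
  have h := finrank_span_finset_le_card (R := R) ({x, y} : Finset M)
  rw [Finset.coe_pair] at h
  exact h.trans Finset.card_le_two

theorem three_vectors_angles_120 (d : ℕ) (a b c : EuclideanSpace ℝ (Fin d))
    (ha : a ≠ 0) (hb : b ≠ 0) (hc : c ≠ 0)
    (hab : 2 * π / 3 ≤ angle a b) (hbc : 2 * π / 3 ≤ angle b c)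
    (hca : 2 * π / 3 ≤ angle c a) :
    angle a b = 2 * π / 3 ∧ angle b c = 2 * π / 3 ∧ angle c a = 2 * π / 3 ∧
      ∃ P : Submodule ℝ (EuclideanSpace ℝ (Fin d)),
        Module.finrank ℝ P ≤ 2 ∧ a ∈ P ∧ b ∈ P ∧ c ∈ P := by
  have hab' := cos_angle_le_neg_half_of_le_angle hab
  have hbc' := cos_angle_le_neg_half_of_le_angle hbc
  have hca' := cos_angle_le_neg_half_of_le_angle hca
  have hsum := neg_three_halves_le_cos_angle_add ha hb hc
  have hc_mem : c ∈ Submodule.span ℝ {a, b} :=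
    mem_span_pair_of_inv_norm_smul_add_eq_zero hc
      (inv_norm_smul_add_eq_zero_of_cos_angle_add ha hb hc (by linarith))
  refine ⟨angle_eq_two_pi_div_three_of_cos_angle (by linarith),
    angle_eq_two_pi_div_three_of_cos_angle (by linarith),
    angle_eq_two_pi_div_three_of_cos_angle (by linarith),
    Submodule.span ℝ {a, b}, Submodule.finrank_span_pair_le a b,
    Submodule.subset_span (by simp), Submodule.subset_span (by simp), hc_mem⟩
end

section
/- Let a, b, c be three points in the Euclidean plane forming a triangle in which the angle at b satisfies ∠abc ≥ 120°. Then for every point s in the plane, ‖a−s‖ + ‖b−s‖ + ‖c−s‖ ≥ ‖a−b‖ + ‖c−b‖; that is, the point b itself minimizes the sum of Euclidean distances to a, b, c. -/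
open Real EuclideanGeometry RealInnerProductSpace

theorem fermat_torricelli_obtuse (a b c : EuclideanSpace ℝ (Fin 2))
    (htri : AffineIndependent ℝ ![a, b, c])
    (hang : 2 * π / 3 ≤ ∠ a b c) :
    ∀ s : EuclideanSpace ℝ (Fin 2),
      dist a b + dist c b ≤ dist a s + dist b s + dist c s := by
  intro s
  have hab : a ≠ b := by
    intro h
    have h01 : (0 : Fin 3) = 1 := htri.injective (by simp [h] : ![a,b,c] 0 = ![a,b,c] 1)
    simp at h01
  have hcb : c ≠ b := by
    intro h
    have h21 : (2 : Fin 3) = 1 := htri.injective (by simp [h] : ![a,b,c] 2 = ![a,b,c] 1)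
    simp at h21
  set u := a - b with hu
  set v := c - b with hv
  have hnu : 0 < ‖u‖ := by
    simpa [hu] using norm_pos_iff.mpr (sub_ne_zero.mpr hab)
  have hnv : 0 < ‖v‖ := by
    simpa [hv] using norm_pos_iff.mpr (sub_ne_zero.mpr hcb)
  have hangle : ∠ a b c = InnerProductGeometry.angle u v := by
    simp [EuclideanGeometry.angle, vsub_eq_sub, hu, hv]
  have hcos23 : Real.cos (2 * π / 3) = -(1/2) := by
    rw [show (2:ℝ) * π / 3 = π - π/3 by ring, Real.cos_pi_sub, Real.cos_pi_div_three]
  have hcosle : Real.cos (∠ a b c) ≤ -(1/2) := by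
    rw [← hcos23]
    exact Real.cos_le_cos_of_nonneg_of_le_pi (by positivity)
      (EuclideanGeometry.angle_le_pi a b c) hang
  have hinner : ⟪u, v⟫ ≤ -(1/2) * (‖u‖ * ‖v‖) := by
    have hc := InnerProductGeometry.cos_angle u v
    rw [← hangle] at hc
    have : ⟪u, v⟫ = Real.cos (∠ a b c) * (‖u‖ * ‖v‖) := by
      rw [hc]; field_simp
    rw [this]
    have := mul_le_mul_of_nonneg_right hcosle (le_of_lt (mul_pos hnu hnv))
    linarith
  set w : EuclideanSpace ℝ (Fin 2) := ‖u‖⁻¹ • u + ‖v‖⁻¹ • v with hw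
  have hwsq : ‖w‖ ^ 2 ≤ 1 := by
    have h1 : ‖w‖ ^ 2 = ‖‖u‖⁻¹ • u‖ ^ 2 + 2 * ⟪‖u‖⁻¹ • u, ‖v‖⁻¹ • v⟫ + ‖‖v‖⁻¹ • v‖ ^ 2 := by
      rw [hw, @norm_add_sq_real]
    have h2 : ‖‖u‖⁻¹ • u‖ = 1 := by
      rw [norm_smul]; simp [abs_of_pos (inv_pos.mpr hnu), inv_mul_cancel₀ hnu.ne']
    have h3 : ‖‖v‖⁻¹ • v‖ = 1 := by
      rw [norm_smul]; simp [abs_of_pos (inv_pos.mpr hnv), inv_mul_cancel₀ hnv.ne']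
    have h4 : ⟪‖u‖⁻¹ • u, ‖v‖⁻¹ • v⟫ = ‖u‖⁻¹ * (‖v‖⁻¹ * ⟪u, v⟫) := by
      rw [real_inner_smul_left, real_inner_smul_right]
    have h5 : ‖u‖⁻¹ * (‖v‖⁻¹ * ⟪u, v⟫) ≤ -(1/2) := by
      have := mul_le_mul_of_nonneg_left hinner
        (le_of_lt (mul_pos (inv_pos.mpr hnu) (inv_pos.mpr hnv)))
      have heq : ‖u‖⁻¹ * ‖v‖⁻¹ * (-(1/2) * (‖u‖ * ‖v‖)) = -(1/2) := by
        field_simp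
      nlinarith
    rw [h1, h2, h3, h4]
    nlinarith
  have hwle : ‖w‖ ≤ 1 := by nlinarith [norm_nonneg w]
  set x : EuclideanSpace ℝ (Fin 2) := b - s with hx
  have key : ∀ (y : EuclideanSpace ℝ (Fin 2)) (p : EuclideanSpace ℝ (Fin 2)),
      0 < ‖y‖ → p - s = y + x → ‖y‖ + ‖y‖⁻¹ * ⟪y, x⟫ ≤ dist p s := by
    intro y p hy hdecomp
    have h := real_inner_le_norm (‖y‖⁻¹ • y) (p - s)
    have hn1 : ‖‖y‖⁻¹ • y‖ = 1 := by
      rw [norm_smul]; simp [abs_of_pos (inv_pos.mpr hy), inv_mul_cancel₀ hy.ne']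
    rw [hn1, one_mul] at h
    have h2 : ⟪‖y‖⁻¹ • y, p - s⟫ = ‖y‖ + ‖y‖⁻¹ * ⟪y, x⟫ := by
      rw [real_inner_smul_left, hdecomp, inner_add_right, real_inner_self_eq_norm_sq]
      field_simp
    rw [h2] at h
    rwa [dist_eq_norm]
  have kA : ‖u‖ + ‖u‖⁻¹ * ⟪u, x⟫ ≤ dist a s := by
    apply key u a hnu
    rw [hu, hx]; abel
  have kC : ‖v‖ + ‖v‖⁻¹ * ⟪v, x⟫ ≤ dist c s := by
    apply key v c hnv
    rw [hv, hx]; abel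
  have kB : ‖x‖ ≤ dist b s := by rw [hx, dist_eq_norm]
  have hwx : ⟪w, x⟫ = ‖u‖⁻¹ * ⟪u, x⟫ + ‖v‖⁻¹ * ⟪v, x⟫ := by
    rw [hw, inner_add_left, real_inner_smul_left, real_inner_smul_left]
  have habs : |⟪w, x⟫| ≤ ‖w‖ * ‖x‖ := abs_real_inner_le_norm w x
  have hb2 : -‖x‖ ≤ ⟪w, x⟫ := by
    have := abs_le.mp habs
    nlinarith [norm_nonneg x]
  have hda : dist a b = ‖u‖ := by rw [dist_eq_norm, hu]
  have hdc : dist c b = ‖v‖ := by rw [dist_eq_norm, hv]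
  rw [hda, hdc]
  linarith [kA, kB, kC, hb2, hwx.symm.le, hwx.le]
end

section
/- Let a, b, c be three points in the Euclidean plane and s a point in the interior of their convex hull with ∠asb = ∠bsc = ∠csa = 120°. Then for every point p in the plane, ‖a−p‖ + ‖b−p‖ + ‖c−p‖ ≥ ‖a−s‖ + ‖b−s‖ + ‖c−s‖, i.e., s minimizes the sum of Euclidean distances to a, b, c. -/
open Real EuclideanGeometry

local notation "⟪" x ", " y "⟫" => @inner ℝ _ _ x y

private lemma cos_2pi3 : Real.cos (2 * π / 3) = -(1/2) := by
  rw [show (2 * π / 3 : ℝ) = π - π/3 by ring, Real.cos_pi_sub, Real.cos_pi_div_three]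

private lemma angle_ne_zero {x y : EuclideanSpace ℝ (Fin 2)}
    (h : InnerProductGeometry.angle x y = 2 * π / 3) : x ≠ 0 := by
  intro hx
  rw [hx, InnerProductGeometry.angle_zero_left] at h
  have := Real.pi_pos
  linarith

private lemma norm_eq_one_of_inner {e : EuclideanSpace ℝ (Fin 2)}
    (he : ⟪e, e⟫ = 1) : ‖e‖ = 1 := by
  have h2 := real_inner_self_eq_norm_mul_norm e
  nlinarith [norm_nonneg e]

private lemma inner_of_angle {x y : EuclideanSpace ℝ (Fin 2)}
    (h : InnerProductGeometry.angle x y = 2 * π / 3) :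
    ⟪x, y⟫ = -(1/2) * (‖x‖ * ‖y‖) := by
  rw [← InnerProductGeometry.cos_angle_mul_norm_mul_norm, h, cos_2pi3]

theorem fermat_torricelli_interior (a b c s : EuclideanSpace ℝ (Fin 2))
    (hs : s ∈ interior (convexHull ℝ {a, b, c}))
    (hab : ∠ a s b = 2 * π / 3) (hbc : ∠ b s c = 2 * π / 3)
    (hca : ∠ c s a = 2 * π / 3) :
    ∀ p : EuclideanSpace ℝ (Fin 2),
      dist a s + dist b s + dist c s ≤ dist a p + dist b p + dist c p := by
  intro p
  have hab' : InnerProductGeometry.angle (a - s) (b - s) = 2 * π / 3 := hab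
  have hbc' : InnerProductGeometry.angle (b - s) (c - s) = 2 * π / 3 := hbc
  have hca' : InnerProductGeometry.angle (c - s) (a - s) = 2 * π / 3 := hca
  have hA : a - s ≠ 0 := angle_ne_zero hab'
  have hB : b - s ≠ 0 := angle_ne_zero hbc'
  have hC : c - s ≠ 0 := angle_ne_zero hca'
  have hnA : (0:ℝ) < ‖a - s‖ := norm_pos_iff.mpr hA
  have hnB : (0:ℝ) < ‖b - s‖ := norm_pos_iff.mpr hB
  have hnC : (0:ℝ) < ‖c - s‖ := norm_pos_iff.mpr hC
  set u : EuclideanSpace ℝ (Fin 2) := ‖a - s‖⁻¹ • (a - s) with hu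
  set v : EuclideanSpace ℝ (Fin 2) := ‖b - s‖⁻¹ • (b - s) with hv
  set w : EuclideanSpace ℝ (Fin 2) := ‖c - s‖⁻¹ • (c - s) with hw
  have hiab := inner_of_angle hab'
  have hibc := inner_of_angle hbc'
  have hica := inner_of_angle hca'
  have huu : ⟪u, u⟫ = 1 := by
    rw [hu, real_inner_smul_left, real_inner_smul_right,
      real_inner_self_eq_norm_mul_norm]
    field_simp
  have hvv : ⟪v, v⟫ = 1 := by
    rw [hv, real_inner_smul_left, real_inner_smul_right,
      real_inner_self_eq_norm_mul_norm]
    field_simp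
  have hww : ⟪w, w⟫ = 1 := by
    rw [hw, real_inner_smul_left, real_inner_smul_right,
      real_inner_self_eq_norm_mul_norm]
    field_simp
  have huv : ⟪u, v⟫ = -(1/2) := by
    rw [hu, hv, real_inner_smul_left, real_inner_smul_right, hiab]
    field_simp
  have hvw : ⟪v, w⟫ = -(1/2) := by
    rw [hv, hw, real_inner_smul_left, real_inner_smul_right, hibc]
    field_simp
  have hwu : ⟪w, u⟫ = -(1/2) := by
    rw [hw, hu, real_inner_smul_left, real_inner_smul_right, hica]
    field_simp
  have hvu : ⟪v, u⟫ = -(1/2) := by rw [real_inner_comm]; exact huv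
  have hwv : ⟪w, v⟫ = -(1/2) := by rw [real_inner_comm]; exact hvw
  have huw : ⟪u, w⟫ = -(1/2) := by rw [real_inner_comm]; exact hwu
  have hsum : u + v + w = 0 := by
    have h0 : ⟪u + v + w, u + v + w⟫ = 0 := by
      simp only [inner_add_left, inner_add_right, huu, hvv, hww, huv, hvw, hwu,
        hvu, hwv, huw]
      norm_num
    exact inner_self_eq_zero.mp h0
  have key : ∀ (x e : EuclideanSpace ℝ (Fin 2)),
      ⟪e, e⟫ = 1 → ⟪x - s, e⟫ + ⟪s - p, e⟫ ≤ dist x p := by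
    intro x e he
    have h1 : ⟪x - s, e⟫ + ⟪s - p, e⟫ = ⟪x - p, e⟫ := by
      rw [← inner_add_left, sub_add_sub_cancel]
    have hne : ‖e‖ = 1 := norm_eq_one_of_inner he
    rw [h1, dist_eq_norm]
    calc ⟪x - p, e⟫ ≤ ‖x - p‖ * ‖e‖ := real_inner_le_norm _ _
      _ = ‖x - p‖ := by rw [hne, mul_one]
  have hAu : ⟪a - s, u⟫ = ‖a - s‖ := by
    rw [hu, real_inner_smul_right, real_inner_self_eq_norm_mul_norm]
    field_simp
  have hBv : ⟪b - s, v⟫ = ‖b - s‖ := by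
    rw [hv, real_inner_smul_right, real_inner_self_eq_norm_mul_norm]
    field_simp
  have hCw : ⟪c - s, w⟫ = ‖c - s‖ := by
    rw [hw, real_inner_smul_right, real_inner_self_eq_norm_mul_norm]
    field_simp
  have ka := key a u huu
  have kb := key b v hvv
  have kc := key c w hww
  rw [hAu] at ka; rw [hBv] at kb; rw [hCw] at kc
  have hzero : ⟪s - p, u⟫ + ⟪s - p, v⟫ + ⟪s - p, w⟫ = 0 := by
    rw [← inner_add_right, ← inner_add_right, hsum, inner_zero_right]
  have da : dist a s = ‖a - s‖ := dist_eq_norm a s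
  have db : dist b s = ‖b - s‖ := dist_eq_norm b s
  have dc : dist c s = ‖c - s‖ := dist_eq_norm c s
  linarith
end

section
/- Let a₁b₁a₂b₂ be a rectangle inscribed in the unit circle centered at the origin, with a₁ = (cos θ, sin θ), b₁ = (−cos θ, sin θ), a₂ = −a₁, b₂ = −b₁ for some θ ∈ (0°, 90°). Consider any finite directed graph drawn in the plane (vertices are points, directed edges are straight segments measured in Euclidean length) that contains a directed path from a₁ to b₁, from a₁ to b₂, from a₂ to b₁, and from a₂ to b₂. Then the total Euclidean length of its edges is at least 4. -/
open Real

/-- There is a directed path from `a` to `b` using the directed edges in `E`. -/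
def HasDirPath (E : Finset ((ℝ × ℝ) × (ℝ × ℝ))) (a b : ℝ × ℝ) : Prop :=
  Relation.ReflTransGen (fun x y => (x, y) ∈ E) a b

/-- The Euclidean length of a straight segment in `ℝ²`. -/
noncomputable def euclLen (e : (ℝ × ℝ) × (ℝ × ℝ)) : ℝ :=
  Real.sqrt ((e.1.1 - e.2.1) ^ 2 + (e.1.2 - e.2.2) ^ 2)

/-!
Calibration by linear potentials. Along a directed path from `a` to `b`, a potential `φ` drops
by `φ a - φ b`. Cut at its last visit to `a`, the path continues without using its first edge
again, so induction on the edge set bounds this drop by the sum over all edges of the positive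
parts of the drops of `φ`. Running a second path against `φ` (i.e. using `-φ`) bounds the
negative parts instead, so two paths together are paid for by `∑ |φ e.1 - φ e.2|`. With `φ = cos θ · x` on the paths `a₁ → b₁`, `a₂ → b₂` this gives
`4 cos² θ`, with `ψ = sin θ · y` on `a₁ → b₂`, `a₂ → b₁` it gives `4 sin² θ`, and
`|cos θ · u| + |sin θ · v| ≤ √(u² + v²)` by Cauchy–Schwarz.
-/

namespace Relation.ReflTransGen

variable {α : Type*} {r : α → α → Prop} {a b : α}

theorem eq_or_exists_head_avoiding_source (h : ReflTransGen r a b) :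
    a = b ∨ ∃ c, r a c ∧ ReflTransGen (fun x y => r x y ∧ x ≠ a) c b := by
  induction h with
  | refl => exact .inl rfl
  | @tail x y _ hxy ih =>
    right
    by_cases hx : x = a
    · subst hx
      exact ⟨y, hxy, .refl⟩
    · rcases ih with rfl | ⟨c, hac, hcx⟩
      · exact absurd rfl hx
      · exact ⟨c, hac, hcx.tail ⟨hxy, hx⟩⟩

end Relation.ReflTransGen

section Potential

variable {α : Type*} {E : Finset (α × α)}

theorem sub_le_sum_posPart_of_reflTransGen (φ : α → ℝ) {a b : α}
    (h : Relation.ReflTransGen (fun x y => (x, y) ∈ E) a b) :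
    φ a - φ b ≤ ∑ e ∈ E, (φ e.1 - φ e.2)⁺ := by
  classical
  induction E using Finset.strongInduction generalizing a b with
  | H E ih =>
    rcases h.eq_or_exists_head_avoiding_source with rfl | ⟨c, hac, hcb⟩
    · simpa using Finset.sum_nonneg fun e _ => posPart_nonneg (φ e.1 - φ e.2)
    · have hcb' : Relation.ReflTransGen (fun x y => (x, y) ∈ E.erase (a, c)) c b :=
        Relation.ReflTransGen.mono (fun x y ⟨hxy, hx⟩ =>
          Finset.mem_erase.mpr ⟨fun he => hx (congrArg Prod.fst he), hxy⟩) _ _ hcb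
      have hrest := ih _ (Finset.erase_ssubset hac) hcb'
      rw [← Finset.add_sum_erase E _ hac]
      linarith [le_posPart (φ a - φ c)]

theorem sub_add_sub_le_sum_abs_of_reflTransGen (φ : α → ℝ) {a b a' b' : α}
    (h : Relation.ReflTransGen (fun x y => (x, y) ∈ E) a b)
    (h' : Relation.ReflTransGen (fun x y => (x, y) ∈ E) a' b') :
    φ a - φ b + (φ b' - φ a') ≤ ∑ e ∈ E, |φ e.1 - φ e.2| := by
  have hpos := sub_le_sum_posPart_of_reflTransGen φ h
  have hneg := sub_le_sum_posPart_of_reflTransGen (fun x => -φ x) h'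
  have hflip (e : α × α) : (-φ e.1 - -φ e.2)⁺ = (φ e.1 - φ e.2)⁻ := by
    rw [← posPart_neg, neg_sub_neg, neg_sub]
  simp only [hflip] at hneg
  simp only [← posPart_add_negPart, Finset.sum_add_distrib]
  linarith

end Potential

theorem abs_mul_add_abs_mul_le_sqrt {c s : ℝ} (hcs : c ^ 2 + s ^ 2 = 1) (u v : ℝ) :
    |c * u| + |s * v| ≤ √(u ^ 2 + v ^ 2) := by
  rw [abs_mul, abs_mul, Real.le_sqrt (by positivity) (by positivity)]
  nlinarith [sq_nonneg (|c| * |v| - |s| * |u|), sq_abs c, sq_abs s, sq_abs u, sq_abs v]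

theorem rectangle_network_length_ge_four_general (θ : ℝ)
    (a₁ b₁ a₂ b₂ : ℝ × ℝ)
    (ha₁ : a₁ = (Real.cos θ, Real.sin θ)) (hb₁ : b₁ = (-Real.cos θ, Real.sin θ))
    (ha₂ : a₂ = -a₁) (hb₂ : b₂ = -b₁)
    (E : Finset ((ℝ × ℝ) × (ℝ × ℝ)))
    (h11 : HasDirPath E a₁ b₁) (h12 : HasDirPath E a₁ b₂)
    (h21 : HasDirPath E a₂ b₁) (h22 : HasDirPath E a₂ b₂) :
    4 ≤ ∑ e ∈ E, euclLen e := by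
  set c := Real.cos θ
  set s := Real.sin θ
  have hcs : c ^ 2 + s ^ 2 = 1 := Real.cos_sq_add_sin_sq θ
  have hx := sub_add_sub_le_sum_abs_of_reflTransGen (fun p => c * p.1) h11 h22
  have hy := sub_add_sub_le_sum_abs_of_reflTransGen (fun p => s * p.2) h12 h21
  have hedge : ∑ e ∈ E, (|c * (e.1.1 - e.2.1)| + |s * (e.1.2 - e.2.2)|) ≤ ∑ e ∈ E, euclLen e :=
    Finset.sum_le_sum fun e _ => abs_mul_add_abs_mul_le_sqrt hcs _ _
  subst ha₁ hb₁ ha₂ hb₂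
  simp only [Prod.fst_neg, Prod.snd_neg, ← mul_sub] at hx hy
  rw [Finset.sum_add_distrib] at hedge
  linarith

/-- Any directed network connecting the two sources `a₁, a₂ = -a₁` to the two
sinks `b₁, b₂ = -b₁` of a rectangle inscribed in the unit circle has total
Euclidean length at least `4`. -/
theorem rectangle_network_length_ge_four (θ : ℝ) (hθ0 : 0 < θ) (hθ1 : θ < π / 2)
    (a₁ b₁ a₂ b₂ : ℝ × ℝ)
    (ha₁ : a₁ = (Real.cos θ, Real.sin θ)) (hb₁ : b₁ = (-Real.cos θ, Real.sin θ))
    (ha₂ : a₂ = -a₁) (hb₂ : b₂ = -b₁)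
    (E : Finset ((ℝ × ℝ) × (ℝ × ℝ)))
    (h11 : HasDirPath E a₁ b₁) (h12 : HasDirPath E a₁ b₂)
    (h21 : HasDirPath E a₂ b₁) (h22 : HasDirPath E a₂ b₂) :
    4 ≤ ∑ e ∈ E, euclLen e :=
  rectangle_network_length_ge_four_general θ a₁ b₁ a₂ b₂ ha₁ hb₁ ha₂ hb₂ E h11 h12 h21 h22
end

section
/- In ℝ² with the ℓ₁-norm ‖(x,y)‖₁ = |x| + |y|, let A = {e₁, −e₁} (sources) and B = {e₂, −e₂} (sinks), where e₁ = (1,0), e₂ = (0,1). Any finite directed network in the plane containing a directed path from each source to each sink has total ℓ₁-length at least 4. Consequently, the network with edges e₁→o, −e₁→o, o→e₂, o→−e₂ (of ℓ₁-length 4) is a shortest such network. -/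
open Relation

lemma path_erase {α : Type*} [DecidableEq α] (E : Finset (α × α)) (e : α × α) (b : α) :
    ∀ x, ReflTransGen (fun p q => (p, q) ∈ E) x b →
      ReflTransGen (fun p q => (p, q) ∈ E.erase e) x b ∨
        ReflTransGen (fun p q => (p, q) ∈ E.erase e) e.2 b := by
  intro x h
  induction h using ReflTransGen.head_induction_on with
  | refl => exact Or.inl ReflTransGen.refl
  | head hxy _ ih =>
    rename_i x' y' _
    rcases ih with ih | ih
    · by_cases he : (x', y') = e
      · right
        have : e.2 = y' := by rw [← he]
        rwa [this]
      · exact Or.inl (ReflTransGen.head (Finset.mem_erase.2 ⟨he, hxy⟩) ih)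
    · exact Or.inr ih

lemma key_bound (f : (ℝ × ℝ) → ℝ) (E : Finset ((ℝ × ℝ) × (ℝ × ℝ))) :
    ∀ a b, ReflTransGen (fun x y => (x, y) ∈ E) a b →
      f a - f b ≤ ∑ e ∈ E, max (f e.1 - f e.2) 0 := by
  induction E using Finset.strongInduction with
  | _ E ih =>
    intro a b h
    rcases h.cases_head with rfl | ⟨c, hac, hcb⟩
    · rw [sub_self]
      exact Finset.sum_nonneg fun e _ => le_max_right _ _
    · have h2 : ReflTransGen (fun p q => (p, q) ∈ E.erase (a, c)) c b := by
        rcases path_erase E (a, c) b c hcb with h' | h' <;> exact h'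
      have hss : E.erase (a, c) ⊂ E := Finset.erase_ssubset hac
      have hrec := ih (E.erase (a, c)) hss c b h2
      calc f a - f b = (f a - f c) + (f c - f b) := by ring
        _ ≤ max (f a - f c) 0 + ∑ e ∈ E.erase (a, c), max (f e.1 - f e.2) 0 :=
            add_le_add (le_max_left _ _) hrec
        _ = ∑ e ∈ E, max (f e.1 - f e.2) 0 := Finset.add_sum_erase E (fun e => max (f e.1 - f e.2) 0) hac



/-- The `ℓ₁`-length of a straight segment in `ℝ²`. -/
def l1Len (e : (ℝ × ℝ) × (ℝ × ℝ)) : ℝ :=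
  |e.1.1 - e.2.1| + |e.1.2 - e.2.2|

/-- In the `ℓ₁`-plane, with sources `±e₁` and sinks `±e₂`, every directed
network containing a directed path from each source to each sink has total
`ℓ₁`-length at least `4`; consequently the star network through the origin,
of length `4`, is a shortest such network. -/
theorem l1_cross_shortest :
    (∀ E : Finset ((ℝ × ℝ) × (ℝ × ℝ)),
        (∀ a ∈ ({((1 : ℝ), (0 : ℝ)), (-1, 0)} : Set (ℝ × ℝ)),
          ∀ b ∈ ({((0 : ℝ), (1 : ℝ)), (0, -1)} : Set (ℝ × ℝ)),
            HasDirPath E a b) →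
        4 ≤ ∑ e ∈ E, l1Len e) ∧
    (∀ a ∈ ({((1 : ℝ), (0 : ℝ)), (-1, 0)} : Set (ℝ × ℝ)),
      ∀ b ∈ ({((0 : ℝ), (1 : ℝ)), (0, -1)} : Set (ℝ × ℝ)),
        HasDirPath
          ({(((1 : ℝ), (0 : ℝ)), ((0 : ℝ), (0 : ℝ))), ((-1, 0), (0, 0)),
            ((0, 0), (0, 1)), ((0, 0), (0, -1))} : Finset ((ℝ × ℝ) × (ℝ × ℝ)))
          a b) ∧
    (∑ e ∈ ({(((1 : ℝ), (0 : ℝ)), ((0 : ℝ), (0 : ℝ))), ((-1, 0), (0, 0)),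
          ((0, 0), (0, 1)), ((0, 0), (0, -1))} : Finset ((ℝ × ℝ) × (ℝ × ℝ))),
        l1Len e) = 4 := by
  refine ⟨?_, ?_, ?_⟩
  · intro E h
    have hL := key_bound (fun p => p.1) E (1, 0) (0, 1)
      (h _ (by simp) _ (by simp))
    have hR := key_bound (fun p => -p.1) E (-1, 0) (0, 1)
      (h _ (by simp) _ (by simp))
    have hU := key_bound (fun p => -p.2) E (1, 0) (0, 1)
      (h _ (by simp) _ (by simp))
    have hD := key_bound (fun p => p.2) E (1, 0) (0, -1)
      (h _ (by simp) _ (by simp))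
    simp only at hL hR hU hD
    norm_num at hL hR hU hD
    have hsum : ∑ e ∈ E, l1Len e =
        (∑ e ∈ E, max (e.1.1 - e.2.1) 0) + (∑ e ∈ E, max (-e.1.1 + e.2.1) 0) +
        ((∑ e ∈ E, max (e.1.2 - e.2.2) 0) + (∑ e ∈ E, max (-e.1.2 + e.2.2) 0)) := by
      rw [← Finset.sum_add_distrib, ← Finset.sum_add_distrib, ← Finset.sum_add_distrib]
      refine Finset.sum_congr rfl fun e _ => ?_
      unfold l1Len
      have habs : ∀ x : ℝ, |x| = max x 0 + max (-x) 0 := fun x => by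
        rcases le_total x 0 with h1 | h1
        · rw [abs_of_nonpos h1, max_eq_right h1, max_eq_left (neg_nonneg.2 h1)]; ring
        · rw [abs_of_nonneg h1, max_eq_left h1, max_eq_right (neg_nonpos.2 h1)]; ring
      have e1 : -e.1.1 + e.2.1 = -(e.1.1 - e.2.1) := by ring
      have e2 : -e.1.2 + e.2.2 = -(e.1.2 - e.2.2) := by ring
      rw [e1, e2, habs, habs]
    rw [hsum]; linarith
  · intro a ha b hb
    simp only [Set.mem_insert_iff, Set.mem_singleton_iff] at ha hb
    unfold HasDirPath
    obtain rfl | rfl := ha <;> obtain rfl | rfl := hb <;>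
      exact Relation.ReflTransGen.head (b := ((0:ℝ),(0:ℝ))) (by simp) (Relation.ReflTransGen.single (by simp))
  · norm_num [Finset.sum_insert, Finset.mem_insert, l1Len, Prod.ext_iff]
end

section
/- Let s be a point in ℝ^d and let v₁, …, v₄ be four nonzero vectors such that the angle between any two of them is at least 120°. Then a contradiction follows; equivalently, at most three nonzero vectors in ℝ^d can pairwise make angles of at least 120° (and if exactly three do, all the angles equal 120° and the vectors are coplanar). -/
open Real InnerProductGeometry
open scoped RealInnerProductSpace

theorem no_four_vectors_angles_120 (d : ℕ) (s : EuclideanSpace ℝ (Fin d))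
    (v : Fin 4 → EuclideanSpace ℝ (Fin d)) (hv : ∀ i, v i ≠ 0)
    (hang : ∀ i j, i ≠ j → 2 * π / 3 ≤ angle (v i) (v j)) :
    False := by
  set u : Fin 4 → EuclideanSpace ℝ (Fin d) := fun i => ‖v i‖⁻¹ • v i with hu
  have key : ∀ i j, ⟪u i, u j⟫ = ⟪v i, v j⟫ / (‖v i‖ * ‖v j‖) := by
    intro i j
    simp only [hu]
    rw [real_inner_smul_left, real_inner_smul_right, div_eq_mul_inv, mul_inv]
    ring
  have hnorm : ∀ i, ⟪u i, u i⟫ = 1 := by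
    intro i
    have h : ‖v i‖ ≠ 0 := norm_ne_zero_iff.mpr (hv i)
    rw [key, real_inner_self_eq_norm_mul_norm, div_self (mul_ne_zero h h)]
  have hij : ∀ i j, i ≠ j → ⟪u i, u j⟫ ≤ -(1/2) := by
    intro i j hne
    have h1 : cos (angle (v i) (v j)) = ⟪v i, v j⟫ / (‖v i‖ * ‖v j‖) :=
      InnerProductGeometry.cos_angle (v i) (v j)
    have hcos : cos (angle (v i) (v j)) ≤ cos (2 * π / 3) := by
      apply Real.cos_le_cos_of_nonneg_of_le_pi
      · positivity
      · exact InnerProductGeometry.angle_le_pi _ _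
      · exact hang i j hne
    have hval : cos (2 * π / 3) = -(1/2) := by
      have h2 : (2 : ℝ) * π / 3 = π - π / 3 := by ring
      rw [h2, Real.cos_pi_sub, Real.cos_pi_div_three]
    rw [key, ← h1]
    linarith
  have h0 : (0:ℝ) ≤ ⟪∑ i, u i, ∑ i, u i⟫ := real_inner_self_nonneg
  have hexp : ⟪∑ i, u i, ∑ i, u i⟫ = ∑ i, ∑ j, ⟪u i, u j⟫ := by
    rw [sum_inner]
    exact Finset.sum_congr rfl fun i _ => inner_sum _ _ _
  rw [hexp] at h0
  have e0 := hnorm 0; have e1 := hnorm 1; have e2 := hnorm 2; have e3 := hnorm 3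
  have h01 := hij 0 1 (by decide); have h02 := hij 0 2 (by decide)
  have h03 := hij 0 3 (by decide); have h10 := hij 1 0 (by decide)
  have h12 := hij 1 2 (by decide); have h13 := hij 1 3 (by decide)
  have h20 := hij 2 0 (by decide); have h21 := hij 2 1 (by decide)
  have h23 := hij 2 3 (by decide); have h30 := hij 3 0 (by decide)
  have h31 := hij 3 1 (by decide); have h32 := hij 3 2 (by decide)
  simp only [Fin.sum_univ_four] at h0
  linarith
end

section
/- Let A = {a₁,a₂,a₃} and B = {b₁,b₂,b₃} be the alternating vertices of a regular hexagon inscribed in the unit circle centered at the origin o, i.e., a₁=(1,0), a₂=(−1/2,√3/2), a₃=(−1/2,−√3/2), bᵢ=−aᵢ. Then every directed network in the Euclidean plane containing a directed path from each aᵢ to each bⱼ has total Euclidean length at least 6; in particular, the star network with edges aᵢ→o and o→bᵢ (i=1,2,3) is a shortest (A,B)-network. -/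
/-!
Calibration. Put `u₁, u₂, u₃ = a₁, a₂, a₃`; these unit vectors sum to `0`, so every partial sum
`∑ i ∈ T, uᵢ` has norm at most `1`. A path from `aᵢ` to `bᵢ = -aᵢ` contains a simple path, whose
edges `e` satisfy `∑ₑ ⟪e.1 - e.2, uᵢ⟫ = ⟪aᵢ - bᵢ, uᵢ⟫ = 2`. Summing over `i` and regrouping by
edges, each edge `e` contributes `⟪e.1 - e.2, ∑ i ∈ T, uᵢ⟫ ≤ ‖e.1 - e.2‖` for some `T`, so the
network has length at least `3 · 2 = 6`, which the star through the origin attains.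
-/

open Finset Relation

section Telescoping

variable {α : Type*} [DecidableEq α]

lemma reflTransGen_erase_or {E : Finset (α × α)} (u v : α) {a b : α}
    (h : ReflTransGen (fun x y => (x, y) ∈ E) a b) :
    ReflTransGen (fun x y => (x, y) ∈ E.erase (u, v)) a b ∨
      ReflTransGen (fun x y => (x, y) ∈ E.erase (u, v)) v b := by
  induction h using ReflTransGen.head_induction_on with
  | refl => exact .inl .refl
  | @head x y hxy _ ih =>
    refine ih.elim (fun ih => ?_) .inr
    by_cases he : (x, y) = (u, v)
    · obtain ⟨rfl, rfl⟩ := Prod.mk.inj he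
      exact .inr ih
    · exact .inl (ih.head (mem_erase.2 ⟨he, hxy⟩))

/-- `S` is the edge set of a simple path from `a` to `b`: each edge is counted once. -/
lemma exists_subset_sum_sub_eq_of_reflTransGen {G : Type*} [AddCommGroup G]
    (E : Finset (α × α)) {a b : α} (h : ReflTransGen (fun x y => (x, y) ∈ E) a b) :
    ∃ S ⊆ E, ∀ f : α → G, ∑ e ∈ S, (f e.1 - f e.2) = f a - f b := by
  induction E using Finset.strongInduction generalizing a with
  | _ E ih =>
    rcases ReflTransGen.cases_head h with rfl | ⟨c, hac, hcb⟩
    · exact ⟨∅, empty_subset _, fun f => by simp⟩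
    have hcb' : ReflTransGen (fun x y => (x, y) ∈ E.erase (a, c)) c b :=
      (reflTransGen_erase_or a c hcb).elim id id
    obtain ⟨S, hSE, hS⟩ := ih _ (erase_ssubset hac) hcb'
    have hacS : (a, c) ∉ S := fun hm => (mem_erase.1 (hSE hm)).1 rfl
    refine ⟨insert (a, c) S, insert_subset hac (hSE.trans (erase_subset _ _)), fun f => ?_⟩
    rw [sum_insert hacS, hS f]
    abel

end Telescoping

theorem sum_sub_le_sum_of_reflTransGen {α ι : Type*} [DecidableEq α] [Fintype ι]
    (E : Finset (α × α)) (len : α × α → ℝ) (f : ι → α → ℝ) (a b : ι → α)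
    (hpath : ∀ i, ReflTransGen (fun x y => (x, y) ∈ E) (a i) (b i))
    (hcal : ∀ e ∈ E, ∀ T : Finset ι, ∑ i ∈ T, (f i e.1 - f i e.2) ≤ len e) :
    ∑ i, (f i (a i) - f i (b i)) ≤ ∑ e ∈ E, len e := by
  choose S hSE hS using fun i => exists_subset_sum_sub_eq_of_reflTransGen (G := ℝ) E (hpath i)
  calc ∑ i, (f i (a i) - f i (b i))
      = ∑ i, ∑ e ∈ E, if e ∈ S i then f i e.1 - f i e.2 else 0 := by
        refine sum_congr rfl fun i _ => ?_
        rw [sum_ite_mem, inter_eq_right.2 (hSE i), hS]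
    _ = ∑ e ∈ E, ∑ i ∈ univ.filter (fun i => e ∈ S i), (f i e.1 - f i e.2) := by
        rw [sum_comm]
        simp only [sum_filter]
    _ ≤ ∑ e ∈ E, len e := sum_le_sum fun e he => hcal e he _

theorem sum_inner_sub_le_sum_norm_sub_of_reflTransGen {α ι V : Type*} [DecidableEq α]
    [Fintype ι] [NormedAddCommGroup V] [InnerProductSpace ℝ V] (pos : α → V)
    (E : Finset (α × α)) (u : ι → V) (hu : ∀ T : Finset ι, ‖∑ i ∈ T, u i‖ ≤ 1) (a b : ι → α)
    (hpath : ∀ i, ReflTransGen (fun x y => (x, y) ∈ E) (a i) (b i)) :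
    ∑ i, inner ℝ (pos (a i) - pos (b i)) (u i) ≤ ∑ e ∈ E, ‖pos e.1 - pos e.2‖ := by
  simp only [inner_sub_left]
  refine sum_sub_le_sum_of_reflTransGen E _ (fun i x => inner ℝ (pos x) (u i)) a b hpath
    fun e _ T => ?_
  calc ∑ i ∈ T, (inner ℝ (pos e.1) (u i) - inner ℝ (pos e.2) (u i))
      = inner ℝ (pos e.1 - pos e.2) (∑ i ∈ T, u i) := by
        simp only [inner_sum, inner_sub_left]
    _ ≤ ‖pos e.1 - pos e.2‖ * ‖∑ i ∈ T, u i‖ := real_inner_le_norm _ _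
    _ ≤ ‖pos e.1 - pos e.2‖ := mul_le_of_le_one_right (norm_nonneg _) (hu T)

theorem norm_sum_le_one_of_card_le_three {ι V : Type*} [Fintype ι] [DecidableEq ι]
    [SeminormedAddCommGroup V] (hι : Fintype.card ι ≤ 3) (u : ι → V) (hu : ∀ i, ‖u i‖ ≤ 1)
    (hsum : ∑ i, u i = 0) (T : Finset ι) : ‖∑ i ∈ T, u i‖ ≤ 1 := by
  have small : ∀ T : Finset ι, #T ≤ 1 → ‖∑ i ∈ T, u i‖ ≤ 1 := by
    intro T hT
    rcases T.eq_empty_or_nonempty with rfl | hne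
    · simp
    · obtain ⟨i, rfl⟩ := card_eq_one.1 (le_antisymm hT hne.card_pos)
      simpa using hu i
  rcases le_or_gt #T 1 with hT | hT
  · exact small T hT
  · have hTc : #Tᶜ ≤ 1 := by rw [card_compl]; omega
    have hT_neg : ∑ i ∈ T, u i = -∑ i ∈ Tᶜ, u i := by
      rw [eq_neg_iff_add_eq_zero, sum_add_sum_compl, hsum]
    rw [hT_neg, norm_neg]
    exact small _ hTc

lemma euclLen_eq_norm (e : (ℝ × ℝ) × (ℝ × ℝ)) :
    euclLen e = ‖WithLp.toLp 2 e.1 - WithLp.toLp 2 e.2‖ := by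
  rw [euclLen, ← WithLp.toLp_sub, WithLp.prod_norm_eq_of_L2]
  simp

theorem six_le_sum_euclLen (u : Fin 3 → ℝ × ℝ) (hu : ∀ i, ‖WithLp.toLp 2 (u i)‖ = 1)
    (hsum : ∑ i, u i = 0) (E : Finset ((ℝ × ℝ) × (ℝ × ℝ)))
    (hE : ∀ i, HasDirPath E (u i) (-u i)) : 6 ≤ ∑ e ∈ E, euclLen e := by
  have hT := norm_sum_le_one_of_card_le_three (by simp) (fun i => WithLp.toLp 2 (u i))
    (fun i => (hu i).le) (by rw [← WithLp.toLp_sum, hsum, WithLp.toLp_zero])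
  calc (6 : ℝ)
      = ∑ i, inner ℝ (WithLp.toLp 2 (u i) - WithLp.toLp 2 (-u i)) (WithLp.toLp 2 (u i)) := by
        simp only [WithLp.toLp_neg, sub_neg_eq_add, inner_add_left, real_inner_self_eq_norm_sq, hu]
        norm_num
    _ ≤ ∑ e ∈ E, euclLen e := by
        simp only [euclLen_eq_norm]
        exact sum_inner_sub_le_sum_norm_sub_of_reflTransGen _ E _ hT u (-u) hE

noncomputable def hexagon : Fin 3 → ℝ × ℝ :=
  ![(1, 0), (-(1 / 2), √3 / 2), (-(1 / 2), -(√3 / 2))]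

lemma norm_toLp_hexagon (i : Fin 3) : ‖WithLp.toLp 2 (hexagon i)‖ = 1 := by
  have h3 : √3 ^ 2 = 3 := Real.sq_sqrt (by norm_num)
  rw [WithLp.prod_norm_eq_of_L2, Real.sqrt_eq_one]
  fin_cases i <;> simp [hexagon, div_pow, h3] <;> norm_num

lemma sum_hexagon : ∑ i, hexagon i = 0 := by
  simp [Fin.sum_univ_three, hexagon, Prod.ext_iff]
  norm_num

lemma sum_euclLen_hexagon_star :
    ∑ e ∈ ({(hexagon 0, 0), (hexagon 1, 0), (hexagon 2, 0),
        (0, -hexagon 0), (0, -hexagon 1), (0, -hexagon 2)} : Finset ((ℝ × ℝ) × (ℝ × ℝ))),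
      euclLen e = 6 := by
  have h3 : √3 ≠ 0 := by positivity
  rw [sum_eq_card_nsmul (b := 1)]
  · simp only [card_insert_eq_ite]
    simp [hexagon, Prod.ext_iff, h3, CharZero.neg_eq_self_iff, CharZero.eq_neg_self_iff,
      eq_comm (a := (0 : ℝ))]
  · simp only [mem_insert, mem_singleton]
    rintro e (rfl | rfl | rfl | rfl | rfl | rfl) <;> simp [euclLen_eq_norm, norm_toLp_hexagon]

/-- For sources `a₁,a₂,a₃` and sinks `b₁,b₂,b₃` at alternating vertices of a
regular hexagon inscribed in the unit circle, every directed `(A,B)`-network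
has total Euclidean length at least `6`, and the star network through the
origin attains this bound, hence is shortest. -/
theorem hexagon_star_shortest
    (a₁ a₂ a₃ b₁ b₂ b₃ : ℝ × ℝ)
    (ha₁ : a₁ = (1, 0)) (ha₂ : a₂ = (-(1 / 2), Real.sqrt 3 / 2))
    (ha₃ : a₃ = (-(1 / 2), -(Real.sqrt 3 / 2)))
    (hb₁ : b₁ = -a₁) (hb₂ : b₂ = -a₂) (hb₃ : b₃ = -a₃) :
    (∀ E : Finset ((ℝ × ℝ) × (ℝ × ℝ)),
        (∀ a ∈ ({a₁, a₂, a₃} : Set (ℝ × ℝ)), ∀ b ∈ ({b₁, b₂, b₃} : Set (ℝ × ℝ)),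
          HasDirPath E a b) →
        6 ≤ ∑ e ∈ E, euclLen e) ∧
    (∀ a ∈ ({a₁, a₂, a₃} : Set (ℝ × ℝ)), ∀ b ∈ ({b₁, b₂, b₃} : Set (ℝ × ℝ)),
      HasDirPath ({(a₁, 0), (a₂, 0), (a₃, 0), (0, b₁), (0, b₂), (0, b₃)} :
          Finset ((ℝ × ℝ) × (ℝ × ℝ))) a b) ∧
    (∑ e ∈ ({(a₁, 0), (a₂, 0), (a₃, 0), (0, b₁), (0, b₂), (0, b₃)} :
        Finset ((ℝ × ℝ) × (ℝ × ℝ))), euclLen e) = 6 := by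
  obtain rfl : a₁ = hexagon 0 := ha₁
  obtain rfl : a₂ = hexagon 1 := ha₂
  obtain rfl : a₃ = hexagon 2 := ha₃
  subst hb₁ hb₂ hb₃
  refine ⟨fun E hE => six_le_sum_euclLen hexagon norm_toLp_hexagon sum_hexagon E fun i => ?_,
    fun a ha b hb => ?_, sum_euclLen_hexagon_star⟩
  · fin_cases i <;> exact hE _ (by simp) _ (by simp)
  · simp only [Set.mem_insert_iff, Set.mem_singleton_iff] at ha hb
    refine .head (b := 0) ?_ (.single ?_)
    · rcases ha with rfl | rfl | rfl <;> simp
    · rcases hb with rfl | rfl | rfl <;> simp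
end
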